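/- arXiv:math/0703236 — 2 statements merged into one kernel-verified Lean document; each statement's English description precedes it below -/
import Mathlib

section
/- Suppose moreover kr₁ ≤ lr₃ and t ∈ (0, π/(k+l)]. Then: (1) f restricted to [−t/k, t/l] attains its maximum at 0 if and only if kr₁ = lr₃; (2) f restricted to [−t/k, t/l] attains its maximum at t/l if and only if l = 1, t = π/(k+1) and k²r₁r₂ + (k+1)²r₁r₃ − r₂r₃ ≤ 0; (3) if neither kr₁ = lr₃ nor (l = 1, t = π/(k+1) and k²r₁r₂ + (k+1)²r₁r₃ − r₂r₃ ≤ 0), then f restricted to [−t/k, t/l] attains its maximum at a point of the open interval (0, t/l). -/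
open Real

/-- `f(x) = |r₁e^{−ikx} + r₂e^{it} + r₃e^{ilx}|²`. -/
noncomputable def fKL (r₁ r₂ r₃ t : ℝ) (k l : ℕ) (x : ℝ) : ℝ :=
  ‖((r₁ : ℂ) * Complex.exp (Complex.I * ((-(k : ℝ) * x : ℝ) : ℂ)) +
    (r₂ : ℂ) * Complex.exp (Complex.I * (t : ℂ)) +
    (r₃ : ℂ) * Complex.exp (Complex.I * ((l * x : ℝ) : ℂ)))‖ ^ 2

namespace Stmt13

noncomputable def F (r₁ r₂ r₃ t K L x : ℝ) : ℝ :=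
  r₁^2 + r₂^2 + r₃^2 + 2*r₁*r₂*Real.cos (K*x + t) + 2*r₂*r₃*Real.cos (t - L*x)
    + 2*r₁*r₃*Real.cos ((K+L)*x)

noncomputable def F' (r₁ r₂ r₃ t K L x : ℝ) : ℝ :=
  -(2*K*r₁*r₂*Real.sin (K*x + t)) + 2*L*r₂*r₃*Real.sin (t - L*x)
    - 2*(K+L)*r₁*r₃*Real.sin ((K+L)*x)

lemma fKL_eq (r₁ r₂ r₃ t : ℝ) (k l : ℕ) (x : ℝ) :
    fKL r₁ r₂ r₃ t k l x = F r₁ r₂ r₃ t (k:ℝ) (l:ℝ) x := by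
  unfold fKL F
  rw [Complex.sq_norm, Complex.normSq_apply]
  simp only [mul_comm Complex.I, Complex.add_re, Complex.add_im, Complex.mul_re, Complex.mul_im,
    Complex.ofReal_re, Complex.ofReal_im, Complex.exp_ofReal_mul_I_re, Complex.exp_ofReal_mul_I_im,
    zero_mul, mul_zero, sub_zero, add_zero, zero_add]
  rw [Real.cos_add ((k:ℝ)*x) t, Real.cos_sub t ((l:ℝ)*x),
    show ((k:ℝ)+(l:ℝ))*x = (k:ℝ)*x + (l:ℝ)*x from by ring,
    Real.cos_add ((k:ℝ)*x) ((l:ℝ)*x),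
    show -(k:ℝ)*x = -((k:ℝ)*x) from by ring, Real.cos_neg, Real.sin_neg]
  have h1 := Real.sin_sq_add_cos_sq ((k:ℝ)*x)
  have h2 := Real.sin_sq_add_cos_sq ((l:ℝ)*x)
  have h3 := Real.sin_sq_add_cos_sq t
  linear_combination r₁^2 * h1 + r₂^2 * h3 + r₃^2 * h2

lemma hasDerivAt_F (r₁ r₂ r₃ t K L x : ℝ) :
    HasDerivAt (F r₁ r₂ r₃ t K L) (F' r₁ r₂ r₃ t K L x) x := by
  have h1 : HasDerivAt (fun x : ℝ => K*x + t) K x := by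
    simpa using ((hasDerivAt_id x).const_mul K).add_const t
  have h2 : HasDerivAt (fun x : ℝ => t - L*x) (-L) x := by
    simpa using ((hasDerivAt_id x).const_mul L).const_sub t
  have h3 : HasDerivAt (fun x : ℝ => (K+L)*x) (K+L) x := by
    simpa using (hasDerivAt_id x).const_mul (K+L)
  have H := (((h1.cos.const_mul (2*r₁*r₂)).add (h2.cos.const_mul (2*r₂*r₃))).add
      (h3.cos.const_mul (2*r₁*r₃))).const_add (r₁^2 + r₂^2 + r₃^2)
  have hfun : F r₁ r₂ r₃ t K L = fun x => r₁^2 + r₂^2 + r₃^2 +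
      (2*r₁*r₂*Real.cos (K*x + t) + 2*r₂*r₃*Real.cos (t - L*x)
        + 2*r₁*r₃*Real.cos ((K+L)*x)) := by
    funext y; unfold F; ring
  rw [hfun]
  refine H.congr_deriv ?_
  unfold F'
  ring

lemma continuous_F (r₁ r₂ r₃ t K L : ℝ) : Continuous (F r₁ r₂ r₃ t K L) := by
  unfold F; fun_prop

lemma strictMonoOn_F {r₁ r₂ r₃ t K L a b : ℝ}
    (h : ∀ y ∈ Set.Ioo a b, 0 < F' r₁ r₂ r₃ t K L y) :
    StrictMonoOn (F r₁ r₂ r₃ t K L) (Set.Icc a b) := by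
  apply strictMonoOn_of_deriv_pos (convex_Icc a b) (continuous_F r₁ r₂ r₃ t K L).continuousOn
  intro y hy
  rw [interior_Icc] at hy
  rw [(hasDerivAt_F r₁ r₂ r₃ t K L y).deriv]
  exact h y hy

lemma strictAntiOn_F {r₁ r₂ r₃ t K L a b : ℝ}
    (h : ∀ y ∈ Set.Ioo a b, F' r₁ r₂ r₃ t K L y < 0) :
    StrictAntiOn (F r₁ r₂ r₃ t K L) (Set.Icc a b) := by
  apply strictAntiOn_of_deriv_neg (convex_Icc a b) (continuous_F r₁ r₂ r₃ t K L).continuousOn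
  intro y hy
  rw [interior_Icc] at hy
  rw [(hasDerivAt_F r₁ r₂ r₃ t K L y).deriv]
  exact h y hy

lemma monotoneOn_F {r₁ r₂ r₃ t K L a b : ℝ}
    (h : ∀ y ∈ Set.Ioo a b, 0 ≤ F' r₁ r₂ r₃ t K L y) :
    MonotoneOn (F r₁ r₂ r₃ t K L) (Set.Icc a b) := by
  apply monotoneOn_of_deriv_nonneg (convex_Icc a b) (continuous_F r₁ r₂ r₃ t K L).continuousOn
  · intro y hy
    exact (hasDerivAt_F r₁ r₂ r₃ t K L y).differentiableAt.differentiableWithinAt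
  · intro y hy
    rw [interior_Icc] at hy
    rw [(hasDerivAt_F r₁ r₂ r₃ t K L y).deriv]
    exact h y hy

lemma exists_lt_right {r₁ r₂ r₃ t K L : ℝ} (a b : ℝ) (hab : a < b)
    (h : 0 < F' r₁ r₂ r₃ t K L a) :
    ∃ x ∈ Set.Ioo a b, F r₁ r₂ r₃ t K L a < F r₁ r₂ r₃ t K L x := by
  have hc : Continuous (F' r₁ r₂ r₃ t K L) := by unfold F'; fun_prop
  have h' : ∀ᶠ x in nhds a, 0 < F' r₁ r₂ r₃ t K L x :=
    hc.continuousAt.eventually_mem (Ioi_mem_nhds h) |>.mono (fun x hx => hx)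
  obtain ⟨ε, hε, hball⟩ := Metric.eventually_nhds_iff.mp h'
  set c := min (a + ε/2) ((a+b)/2) with hc_def
  have hac : a < c := lt_min (by linarith) (by linarith)
  have hcb : c < b := lt_of_le_of_lt (min_le_right _ _) (by linarith)
  have mono : StrictMonoOn (F r₁ r₂ r₃ t K L) (Set.Icc a c) := by
    apply strictMonoOn_F
    intro y hy
    apply hball
    rw [Real.dist_eq, abs_of_pos (by linarith [hy.1])]
    have : y < a + ε/2 := lt_of_lt_of_le hy.2 (min_le_left _ _)
    linarith
  exact ⟨c, ⟨hac, hcb⟩, mono (Set.left_mem_Icc.2 hac.le) (Set.right_mem_Icc.2 hac.le) hac⟩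

lemma exists_lt_left {r₁ r₂ r₃ t K L : ℝ} (a b : ℝ) (hab : a < b)
    (h : F' r₁ r₂ r₃ t K L b < 0) :
    ∃ x ∈ Set.Ioo a b, F r₁ r₂ r₃ t K L b < F r₁ r₂ r₃ t K L x := by
  have hc : Continuous (F' r₁ r₂ r₃ t K L) := by unfold F'; fun_prop
  have h' : ∀ᶠ x in nhds b, F' r₁ r₂ r₃ t K L x < 0 :=
    hc.continuousAt.eventually_mem (Iio_mem_nhds h) |>.mono (fun x hx => hx)
  obtain ⟨ε, hε, hball⟩ := Metric.eventually_nhds_iff.mp h'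
  set c := max (b - ε/2) ((a+b)/2) with hc_def
  have hcb : c < b := max_lt (by linarith) (by linarith)
  have hac : a < c := lt_of_lt_of_le (by linarith) (le_max_right _ _)
  have anti : StrictAntiOn (F r₁ r₂ r₃ t K L) (Set.Icc c b) := by
    apply strictAntiOn_F
    intro y hy
    apply hball
    rw [Real.dist_eq, abs_of_neg (by linarith [hy.2])]
    have : b - ε/2 ≤ y := le_trans (le_max_left _ _) hy.1.le
    linarith
  exact ⟨c, ⟨hac, hcb⟩, anti (Set.left_mem_Icc.2 hcb.le) (Set.right_mem_Icc.2 hcb.le) hcb⟩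



lemma F'_key (r₁ r₂ r₃ t K L y : ℝ) :
    F' r₁ r₂ r₃ t K L y =
      (4*K*r₁*r₂) * ((-Real.sin ((K+L)*y/2)) * Real.cos (t + (K-L)*y/2))
      + 2*(L*r₃ - K*r₁)*r₂ * Real.sin (t - L*y)
      + (4*(K+L)*r₁*r₃) * ((-Real.sin ((K+L)*y/2)) * Real.cos ((K+L)*y/2)) := by
  have e1 := Real.sin_sub_sin (K*y+t) (t-L*y)
  rw [show ((K*y+t) - (t-L*y))/2 = (K+L)*y/2 by ring,
      show ((K*y+t) + (t-L*y))/2 = t + (K-L)*y/2 by ring] at e1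
  have e2 : Real.sin ((K+L)*y) = 2 * Real.sin ((K+L)*y/2) * Real.cos ((K+L)*y/2) := by
    have h := Real.sin_two_mul ((K+L)*y/2)
    rw [show 2*((K+L)*y/2) = (K+L)*y by ring] at h
    exact h
  unfold F'
  linear_combination (-(2*K*r₁*r₂)) * e1 + (-(2*(K+L)*r₁*r₃)) * e2

-- cos(t + (K-L)y/2) ≥ 0 for y in the closed interval
lemma cos_u_nonneg {K L t : ℝ} (hK : 1 ≤ K) (hL : 1 ≤ L) (ht0 : 0 < t)
    (htp : t*(K+L) ≤ π) {y : ℝ} (hy : y ∈ Set.Icc (-t/K) (t/L)) :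
    0 ≤ Real.cos (t + (K-L)*y/2) := by
  have hK0 : 0 < K := by linarith
  have hL0 : 0 < L := by linarith
  have hy1 : -t ≤ y*K := by
    have := hy.1
    rw [div_le_iff₀ hK0] at this
    linarith [this]
  have hy2 : y*L ≤ t := by
    have := hy.2
    rw [le_div_iff₀ hL0] at this
    linarith [this]
  apply Real.cos_nonneg_of_mem_Icc
  constructor
  · -- -(π/2) ≤ t + (K-L)*y/2 ; in fact t/2 ≤ it
    rcases le_total L K with hLK | hKL
    · -- (K-L)*y ≥ -t : (K-L)*y*K ≥ (K-L)*(-t) since y*K ≥ -t and K-L ≥ 0; then divide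
      nlinarith [mul_le_mul_of_nonneg_left hy1 (sub_nonneg.2 hLK), pi_pos,
        mul_pos ht0 hK0]
    · -- K ≤ L: (K-L)*y ≥ -t using y*L ≤ t
      nlinarith [mul_le_mul_of_nonneg_left hy2 (sub_nonneg.2 hKL), pi_pos,
        mul_pos ht0 hL0]
  · -- t + (K-L)*y/2 ≤ π/2
    rcases le_total L K with hLK | hKL
    · nlinarith [mul_le_mul_of_nonneg_left hy2 (sub_nonneg.2 hLK), mul_pos ht0 hK0]
    · nlinarith [mul_le_mul_of_nonneg_left hy1 (sub_nonneg.2 hKL), mul_pos ht0 hL0]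

lemma F'_pos_left {r₁ r₂ r₃ t K L : ℝ} (hK : 1 ≤ K) (hL : 1 ≤ L)
    (hr₁ : 0 < r₁) (hr₂ : 0 < r₂) (hr₃ : 0 < r₃) (hklr : K*r₁ ≤ L*r₃)
    (ht0 : 0 < t) (htp : t*(K+L) ≤ π) :
    ∀ y ∈ Set.Ioo (-t/K) 0, 0 < F' r₁ r₂ r₃ t K L y := by
  intro y hy
  have hK0 : 0 < K := by linarith
  have hL0 : 0 < L := by linarith
  have hπ := pi_pos
  have hy1 : -t < y*K := by
    have := hy.1; rw [div_lt_iff₀ hK0] at this; linarith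
  have hy2 : y < 0 := hy.2
  -- v = (K+L)*y/2 ∈ (-π/2, 0)
  have hv1 : -(π/2) < (K+L)*y/2 := by nlinarith
  have hv2 : (K+L)*y/2 < 0 := by nlinarith
  have hsv : Real.sin ((K+L)*y/2) < 0 :=
    Real.sin_neg_of_neg_of_neg_pi_lt hv2 (by linarith)
  have hcv : 0 < Real.cos ((K+L)*y/2) :=
    Real.cos_pos_of_mem_Ioo ⟨hv1, by linarith⟩
  have hcu : 0 ≤ Real.cos (t + (K-L)*y/2) :=
    cos_u_nonneg hK hL ht0 htp ⟨hy.1.le, le_trans hy.2.le (by positivity)⟩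
  have hstl : 0 ≤ Real.sin (t - L*y) := by
    apply Real.sin_nonneg_of_nonneg_of_le_pi
    · nlinarith
    · nlinarith
  rw [F'_key]
  have hA : 0 ≤ (4*K*r₁*r₂) * ((-Real.sin ((K+L)*y/2)) * Real.cos (t + (K-L)*y/2)) :=
    mul_nonneg (by positivity) (mul_nonneg (by linarith) hcu)
  have hB : 0 ≤ 2*(L*r₃ - K*r₁)*r₂ * Real.sin (t - L*y) :=
    mul_nonneg (mul_nonneg (by linarith) hr₂.le) hstl
  have hC : 0 < (4*(K+L)*r₁*r₃) * ((-Real.sin ((K+L)*y/2)) * Real.cos ((K+L)*y/2)) :=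
    mul_pos (by positivity) (mul_pos (by linarith) hcv)
  linarith

lemma F'_neg_right {r₁ r₂ r₃ t K L : ℝ} (hK : 1 ≤ K) (hL : 1 ≤ L)
    (hr₁ : 0 < r₁) (hr₂ : 0 < r₂) (hr₃ : 0 < r₃) (heq : K*r₁ = L*r₃)
    (ht0 : 0 < t) (htp : t*(K+L) ≤ π) :
    ∀ y ∈ Set.Ioo (0:ℝ) (t/L), F' r₁ r₂ r₃ t K L y < 0 := by
  intro y hy
  have hK0 : 0 < K := by linarith
  have hL0 : 0 < L := by linarith
  have hπ := pi_pos
  have hy1 : 0 < y := hy.1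
  have hy2 : y*L < t := by
    have := hy.2; rw [lt_div_iff₀ hL0] at this; linarith
  have hv1 : 0 < (K+L)*y/2 := by positivity
  have hv2 : (K+L)*y/2 < π/2 := by nlinarith
  have hsv : 0 < Real.sin ((K+L)*y/2) :=
    Real.sin_pos_of_pos_of_lt_pi hv1 (by linarith)
  have hcv : 0 < Real.cos ((K+L)*y/2) :=
    Real.cos_pos_of_mem_Ioo ⟨by linarith, hv2⟩
  have hcu : 0 ≤ Real.cos (t + (K-L)*y/2) := by
    apply cos_u_nonneg hK hL ht0 htp
    constructor
    · have h0 : -t/K < 0 := div_neg_of_neg_of_pos (by linarith) hK0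
      linarith
    · exact hy.2.le
  rw [F'_key, heq]
  have hA : (4*K*r₁*r₂) * ((-Real.sin ((K+L)*y/2)) * Real.cos (t + (K-L)*y/2)) ≤ 0 :=
    mul_nonpos_of_nonneg_of_nonpos (by positivity)
      (mul_nonpos_of_nonpos_of_nonneg (by linarith) hcu)
  have hC : (4*(K+L)*r₁*r₃) * ((-Real.sin ((K+L)*y/2)) * Real.cos ((K+L)*y/2)) < 0 :=
    mul_neg_of_pos_of_neg (by positivity)
      (mul_neg_of_neg_of_pos (by linarith) hcv)
  have : 2*(L*r₃ - L*r₃)*r₂ * Real.sin (t - L*y) = 0 := by ring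
  linarith



lemma abs_sin_nat_mul_le (n : ℕ) {s : ℝ} (h0 : 0 ≤ s) (hπ : s ≤ π) :
    |Real.sin ((n:ℝ)*s)| ≤ (n:ℝ) * Real.sin s := by
  induction n with
  | zero => simp
  | succ m ih =>
    have hs := Real.sin_nonneg_of_nonneg_of_le_pi h0 hπ
    push_cast
    rw [show ((m:ℝ)+1)*s = (m:ℝ)*s + s by ring, Real.sin_add]
    calc |Real.sin ((m:ℝ)*s)*Real.cos s + Real.cos ((m:ℝ)*s)*Real.sin s|
        ≤ |Real.sin ((m:ℝ)*s)*Real.cos s| + |Real.cos ((m:ℝ)*s)*Real.sin s| := abs_add_le _ _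
      _ ≤ |Real.sin ((m:ℝ)*s)| + Real.sin s := by
          rw [abs_mul, abs_mul, abs_of_nonneg hs]
          have h1 := Real.abs_cos_le_one s
          have h2 := Real.abs_cos_le_one ((m:ℝ)*s)
          have h3 := abs_nonneg (Real.sin ((m:ℝ)*s))
          nlinarith
      _ ≤ (m:ℝ)*Real.sin s + Real.sin s := by linarith [ih]
      _ = ((m:ℝ)+1)*Real.sin s := by ring

-- identity for l = 1, t(K+1) = π : F'(y) in terms of s = t - y
lemma F'_l_one {r₁ r₂ r₃ t K : ℝ} (htKπ : t*(K+1) = π) (y : ℝ) :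
    F' r₁ r₂ r₃ t K 1 y =
      2*r₂*r₃*Real.sin (t - y) - 2*K*r₁*r₂*Real.sin (K*(t-y))
        - 2*(K+1)*r₁*r₃*Real.sin ((K+1)*(t-y)) := by
  unfold F'
  rw [show K*y + t = π - K*(t-y) by linear_combination htKπ,
      show (K+1)*y = π - (K+1)*(t-y) by linear_combination htKπ,
      Real.sin_pi_sub, Real.sin_pi_sub]
  ring

lemma F'_nonneg_l_one {r₁ r₂ r₃ t : ℝ} (k : ℕ) (hk : 1 ≤ k)
    (hr₁ : 0 < r₁) (hr₂ : 0 < r₂) (hr₃ : 0 < r₃)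
    (ht0 : 0 < t) (htKπ : t*((k:ℝ)+1) = π)
    (hcond : (k:ℝ)^2*r₁*r₂ + ((k:ℝ)+1)^2*r₁*r₃ ≤ r₂*r₃) :
    ∀ y ∈ Set.Ioo (0:ℝ) t, 0 ≤ F' r₁ r₂ r₃ t (k:ℝ) 1 y := by
  intro y hy
  set K := (k:ℝ) with hKdef
  have hK : 1 ≤ K := by rw [hKdef]; exact_mod_cast hk
  set s := t - y with hs_def
  have hs0 : 0 ≤ s := by simp [hs_def]; linarith [hy.2]
  have hsπ : s ≤ π := by nlinarith [hy.1]
  have hsin : 0 ≤ Real.sin s := Real.sin_nonneg_of_nonneg_of_le_pi hs0 hsπ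
  have h1 : Real.sin (K*s) ≤ K * Real.sin s :=
    le_trans (le_abs_self _) (abs_sin_nat_mul_le k hs0 hsπ)
  have h2 : Real.sin ((K+1)*s) ≤ (K+1) * Real.sin s := by
    have := abs_sin_nat_mul_le (k+1) hs0 hsπ
    push_cast at this
    exact le_trans (le_abs_self _) this
  rw [F'_l_one htKπ, ← hs_def]
  nlinarith [mul_le_mul_of_nonneg_left h1 (show (0:ℝ) ≤ 2*K*r₁*r₂ by positivity),
    mul_le_mul_of_nonneg_left h2 (show (0:ℝ) ≤ 2*(K+1)*r₁*r₃ by positivity),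
    mul_nonneg hsin (show (0:ℝ) ≤ r₂*r₃ - (K^2*r₁*r₂ + (K+1)^2*r₁*r₃) by linarith)]

set_option maxHeartbeats 1000000 in
lemma F'_neg_near_t {r₁ r₂ r₃ t K : ℝ} (hK : 1 ≤ K)
    (hr₁ : 0 < r₁) (hr₂ : 0 < r₂) (hr₃ : 0 < r₃)
    (ht0 : 0 < t) (htKπ : t*(K+1) = π)
    (hcond : r₂*r₃ < K^2*r₁*r₂ + (K+1)^2*r₁*r₃) :
    ∃ s₀, 0 < s₀ ∧ s₀ < t ∧
      ∀ y ∈ Set.Ioo (t - s₀) t, F' r₁ r₂ r₃ t K 1 y < 0 := by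
  set C := K^2*r₁*r₂ + (K+1)^2*r₁*r₃ - r₂*r₃ with hCdef
  set M := K^4*r₁*r₂ + (K+1)^4*r₁*r₃ with hMdef
  have hC0 : 0 < C := by simp [hCdef]; linarith
  have hM0 : 0 < M := by positivity
  set s₀ := min (t/2) (min (1/(K+1)) (Real.sqrt (C/M))) with hs₀def
  have hs₀0 : 0 < s₀ := by
    apply lt_min (by linarith)
    apply lt_min (by positivity)
    exact Real.sqrt_pos.2 (by positivity)
  have hs₀t : s₀ < t := lt_of_le_of_lt (min_le_left _ _) (by linarith)
  refine ⟨s₀, hs₀0, hs₀t, ?_⟩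
  intro y hy
  set s := t - y with hs_def
  have hss : 0 < s ∧ s < s₀ := ⟨by simp [hs_def]; linarith [hy.2], by
    have := hy.1; simp [hs_def]; linarith⟩
  obtain ⟨hs0, hs1⟩ := hss
  have hsK1 : (K+1)*s ≤ 1 := by
    have h1 : s ≤ 1/(K+1) :=
      le_trans hs1.le (le_trans (min_le_right _ _) (min_le_left _ _))
    rw [le_div_iff₀ (by linarith)] at h1
    linarith
  have hs2 : s^2 ≤ C/M := by
    have h1 : s ≤ Real.sqrt (C/M) :=
      le_trans hs1.le (le_trans (min_le_right _ _) (min_le_right _ _))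
    have := Real.sq_sqrt (show (0:ℝ) ≤ C/M by positivity)
    nlinarith [Real.sqrt_nonneg (C/M)]
  -- sine bounds
  have hb1 : Real.sin s < s := Real.sin_lt hs0
  have hb2 : K*s - (K*s)^3/4 < Real.sin (K*s) :=
    lt_of_le_of_lt (by nlinarith [pow_pos (mul_pos (by linarith : (0:ℝ) < K) hs0) 3])
      (Real.sin_gt_sub_cube (by nlinarith))
  have hb3 : (K+1)*s - ((K+1)*s)^3/4 < Real.sin ((K+1)*s) :=
    lt_of_le_of_lt (by nlinarith [pow_pos (mul_pos (by linarith : (0:ℝ) < K+1) hs0) 3])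
      (Real.sin_gt_sub_cube (by nlinarith))
  rw [F'_l_one htKπ, ← hs_def]
  have hMC : M * s^2 ≤ C := by
    rw [le_div_iff₀ hM0] at hs2
    nlinarith
  have e1 : 2*r₂*r₃*Real.sin s < 2*r₂*r₃*s :=
    mul_lt_mul_of_pos_left hb1 (by positivity)
  have e2 : 2*K*r₁*r₂*(K*s - (K*s)^3/4) < 2*K*r₁*r₂*Real.sin (K*s) :=
    mul_lt_mul_of_pos_left hb2 (by positivity)
  have e3 : 2*(K+1)*r₁*r₃*((K+1)*s - ((K+1)*s)^3/4) < 2*(K+1)*r₁*r₃*Real.sin ((K+1)*s) :=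
    mul_lt_mul_of_pos_left hb3 (by positivity)
  have e4 : s * (M * s^2) ≤ s * C := mul_le_mul_of_nonneg_left hMC hs0.le
  have e5 : 0 < s * C := mul_pos hs0 hC0
  rw [hCdef] at e4 e5
  rw [hMdef] at e4
  clear_value s₀ s C M
  nlinarith [e1, e2, e3, e4, e5]


end Stmt13

set_option maxHeartbeats 1000000 in
open Stmt13 in
theorem stmt13 (k l : ℕ) (hk : 0 < k) (hl : 0 < l) (hkl : Nat.Coprime k l)
    (r₁ r₂ r₃ : ℝ) (hr₁ : 0 < r₁) (hr₂ : 0 < r₂) (hr₃ : 0 < r₃)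
    (hklr : k * r₁ ≤ l * r₃)
    (t : ℝ) (ht : t ∈ Set.Ioc 0 (π / (k + l))) :
    -- (1) maximum attained at 0 iff kr₁ = lr₃
    ((∀ y ∈ Set.Icc (-t / k) (t / l),
        fKL r₁ r₂ r₃ t k l y ≤ fKL r₁ r₂ r₃ t k l 0) ↔ k * r₁ = l * r₃) ∧
    -- (2) maximum attained at t/l iff l = 1, t = π/(k+1) and the coefficient condition
    ((∀ y ∈ Set.Icc (-t / k) (t / l),
        fKL r₁ r₂ r₃ t k l y ≤ fKL r₁ r₂ r₃ t k l (t / l)) ↔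
      (l = 1 ∧ t = π / (k + 1) ∧
        k ^ 2 * r₁ * r₂ + (k + 1 : ℝ) ^ 2 * r₁ * r₃ - r₂ * r₃ ≤ 0)) ∧
    -- (3) otherwise the maximum is attained in the open interval (0, t/l)
    (¬ (k * r₁ = l * r₃) →
      ¬ (l = 1 ∧ t = π / (k + 1) ∧
          k ^ 2 * r₁ * r₂ + (k + 1 : ℝ) ^ 2 * r₁ * r₃ - r₂ * r₃ ≤ 0) →
      ∃ x ∈ Set.Ioo (0 : ℝ) (t / l), ∀ y ∈ Set.Icc (-t / k) (t / l),
        fKL r₁ r₂ r₃ t k l y ≤ fKL r₁ r₂ r₃ t k l x) := by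
  obtain ⟨ht0, ht2⟩ := ht
  have hK : (1:ℝ) ≤ (k:ℝ) := by exact_mod_cast hk
  have hL : (1:ℝ) ≤ (l:ℝ) := by exact_mod_cast hl
  have hK0 : (0:ℝ) < (k:ℝ) := by linarith
  have hL0 : (0:ℝ) < (l:ℝ) := by linarith
  have hπ := Real.pi_pos
  have htp : t * ((k:ℝ)+(l:ℝ)) ≤ π := by
    rw [le_div_iff₀ (by positivity)] at ht2; linarith
  have ha0 : -t/(k:ℝ) < 0 := div_neg_of_neg_of_pos (by linarith) hK0
  have hb0 : 0 < t/(l:ℝ) := by positivity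
  have hab : -t/(k:ℝ) < t/(l:ℝ) := lt_trans ha0 hb0
  have htπ : t < π := by nlinarith
  simp only [fKL_eq]
  have monoLeft : StrictMonoOn (F r₁ r₂ r₃ t (k:ℝ) (l:ℝ)) (Set.Icc (-t/(k:ℝ)) 0) :=
    strictMonoOn_F (F'_pos_left hK hL hr₁ hr₂ hr₃ hklr ht0 htp)
  have hderiv0 : ((k:ℝ)*r₁ < (l:ℝ)*r₃) → 0 < F' r₁ r₂ r₃ t (k:ℝ) (l:ℝ) 0 := by
    intro hlt
    have hst : 0 < Real.sin t := Real.sin_pos_of_pos_of_lt_pi ht0 htπ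
    unfold F'
    simp only [mul_zero, zero_add, sub_zero, Real.sin_zero]
    nlinarith [mul_pos (mul_pos hr₂ hst) (sub_pos.2 hlt)]
  have part1 : (∀ y ∈ Set.Icc (-t/(k:ℝ)) (t/(l:ℝ)),
      F r₁ r₂ r₃ t (k:ℝ) (l:ℝ) y ≤ F r₁ r₂ r₃ t (k:ℝ) (l:ℝ) 0) ↔ (k:ℝ) * r₁ = (l:ℝ) * r₃ := by
    constructor
    · intro hmax
      by_contra hne
      have hlt : (k:ℝ)*r₁ < (l:ℝ)*r₃ := lt_of_le_of_ne hklr hne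
      obtain ⟨x, hx, hFx⟩ := exists_lt_right 0 (t/(l:ℝ)) hb0 (hderiv0 hlt)
      exact absurd (hmax x ⟨by linarith [hx.1], hx.2.le⟩) (not_le.2 hFx)
    · intro heq
      have antiRight : StrictAntiOn (F r₁ r₂ r₃ t (k:ℝ) (l:ℝ)) (Set.Icc 0 (t/(l:ℝ))) :=
        strictAntiOn_F (F'_neg_right hK hL hr₁ hr₂ hr₃ heq ht0 htp)
      intro y hy
      rcases le_total y 0 with h | h
      · exact monoLeft.monotoneOn ⟨hy.1, h⟩ ⟨ha0.le, le_refl 0⟩ h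
      · exact antiRight.antitoneOn ⟨le_refl 0, hb0.le⟩ ⟨h, hy.2⟩ h
  have part2 : (∀ y ∈ Set.Icc (-t/(k:ℝ)) (t/(l:ℝ)),
      F r₁ r₂ r₃ t (k:ℝ) (l:ℝ) y ≤ F r₁ r₂ r₃ t (k:ℝ) (l:ℝ) (t/(l:ℝ))) ↔
      (l = 1 ∧ t = π / ((k:ℝ) + 1) ∧
        (k:ℝ) ^ 2 * r₁ * r₂ + ((k:ℝ) + 1) ^ 2 * r₁ * r₃ - r₂ * r₃ ≤ 0) := by
    constructor
    · intro hmax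
      have hθle : ((k:ℝ)+(l:ℝ))*(t/(l:ℝ)) ≤ π := by
        rw [← mul_div_assoc, div_le_iff₀ hL0]
        nlinarith
      have hθ : ((k:ℝ)+(l:ℝ))*(t/(l:ℝ)) = π := by
        by_contra hne
        have hltπ : ((k:ℝ)+(l:ℝ))*(t/(l:ℝ)) < π := lt_of_le_of_ne hθle hne
        have hF'b : F' r₁ r₂ r₃ t (k:ℝ) (l:ℝ) (t/(l:ℝ)) < 0 := by
          unfold F'
          rw [show (k:ℝ)*(t/(l:ℝ)) + t = ((k:ℝ)+(l:ℝ))*(t/(l:ℝ)) by field_simp,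
              show t - (l:ℝ)*(t/(l:ℝ)) = 0 by field_simp; ring, Real.sin_zero]
          have hs : 0 < Real.sin (((k:ℝ)+(l:ℝ))*(t/(l:ℝ))) :=
            Real.sin_pos_of_pos_of_lt_pi (by positivity) hltπ
          nlinarith [mul_pos (mul_pos hr₁ hr₂) hs, mul_pos (mul_pos hr₁ hr₃) hs]
        obtain ⟨x, hx, hFx⟩ := exists_lt_left (-t/(k:ℝ)) (t/(l:ℝ)) hab hF'b
        exact absurd (hmax x ⟨hx.1.le, hx.2.le⟩) (not_le.2 hFx)
      have hteq : t*((k:ℝ)+(l:ℝ)) = π*(l:ℝ) := by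
        field_simp at hθ; linarith
      have hl1R : (l:ℝ) ≤ 1 := by nlinarith
      have hl1 : l = 1 := le_antisymm (by exact_mod_cast hl1R) hl
      subst hl1
      simp only [Nat.cast_one] at hmax monoLeft
      push_cast at hteq
      have ht1 : t*((k:ℝ)+1) = π := by linarith
      have htv : t = π/((k:ℝ)+1) := by rw [eq_div_iff (by positivity)]; linarith
      refine ⟨rfl, htv, ?_⟩
      by_contra hc
      push_neg at hc
      push_cast at hc
      obtain ⟨s₀, hs₀0, hs₀t, hneg⟩ := F'_neg_near_t hK hr₁ hr₂ hr₃ ht0 ht1 (by linarith)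
      have anti : StrictAntiOn (F r₁ r₂ r₃ t (k:ℝ) 1) (Set.Icc (t-s₀) t) :=
        strictAntiOn_F hneg
      have hkey : F r₁ r₂ r₃ t (k:ℝ) 1 t < F r₁ r₂ r₃ t (k:ℝ) 1 (t-s₀) :=
        anti (Set.left_mem_Icc.2 (by linarith)) (Set.right_mem_Icc.2 (by linarith)) (by linarith)
      rw [div_one] at hmax
      have := hmax (t-s₀) ⟨by linarith, by linarith⟩
      linarith
    · rintro ⟨hl1, htv, hcond⟩
      subst hl1
      simp only [Nat.cast_one] at monoLeft ⊢
      push_cast at hcond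
      have ht1 : t*((k:ℝ)+1) = π := by
        rw [htv]; field_simp
      have monoRight : MonotoneOn (F r₁ r₂ r₃ t (k:ℝ) 1) (Set.Icc 0 t) :=
        monotoneOn_F (F'_nonneg_l_one k hk hr₁ hr₂ hr₃ ht0 ht1 (by linarith))
      rw [div_one]
      intro y hy
      rcases le_total y 0 with h | h
      · have h1 : F r₁ r₂ r₃ t (k:ℝ) 1 y ≤ F r₁ r₂ r₃ t (k:ℝ) 1 0 :=
          monoLeft.monotoneOn ⟨hy.1, h⟩ ⟨ha0.le, le_refl 0⟩ h
        have h2 : F r₁ r₂ r₃ t (k:ℝ) 1 0 ≤ F r₁ r₂ r₃ t (k:ℝ) 1 t :=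
          monoRight ⟨le_refl 0, ht0.le⟩ ⟨ht0.le, le_refl t⟩ ht0.le
        linarith
      · exact monoRight ⟨h, hy.2⟩ ⟨ht0.le, le_refl t⟩ hy.2
  refine ⟨part1, part2, ?_⟩
  intro h1 h2
  have hlt : (k:ℝ)*r₁ < (l:ℝ)*r₃ := lt_of_le_of_ne hklr h1
  obtain ⟨x₀, hx₀mem, hx₀max⟩ := (isCompact_Icc (a := -t/(k:ℝ)) (b := t/(l:ℝ))).exists_isMaxOn
    (Set.nonempty_Icc.2 hab.le) ((continuous_F r₁ r₂ r₃ t (k:ℝ) (l:ℝ)).continuousOn)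
  have hmax' := isMaxOn_iff.mp hx₀max
  obtain ⟨z, hz, hFz⟩ := exists_lt_right 0 (t/(l:ℝ)) hb0 (hderiv0 hlt)
  have hx₀ne : x₀ ≠ t/(l:ℝ) := by
    intro h
    apply h2
    have := part2.mp (fun y hy => h ▸ hmax' y hy)
    obtain ⟨e1, e2, e3⟩ := this
    exact ⟨e1, e2, by push_cast; linarith⟩
  have hx₀pos : 0 < x₀ := by
    by_contra h
    push_neg at h
    have hle1 : F r₁ r₂ r₃ t (k:ℝ) (l:ℝ) x₀ ≤ F r₁ r₂ r₃ t (k:ℝ) (l:ℝ) 0 :=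
      monoLeft.monotoneOn ⟨hx₀mem.1, h⟩ ⟨ha0.le, le_refl 0⟩ h
    have hle2 : F r₁ r₂ r₃ t (k:ℝ) (l:ℝ) z ≤ F r₁ r₂ r₃ t (k:ℝ) (l:ℝ) x₀ :=
      hmax' z ⟨by linarith [hz.1], hz.2.le⟩
    linarith
  exact ⟨x₀, ⟨hx₀pos, lt_of_le_of_ne hx₀mem.2 hx₀ne⟩, hmax'⟩
end

section
/- Suppose moreover kr₁ ≤ lr₃ and t ∈ (0, π/(k+l)]. Unless l = 1, t = π/(k+1) and k²r₁r₂ + (k+1)²r₁r₃ − r₂r₃ = 0, the function f attains its absolute maximum with multiplicity 2: at every point x* ∈ [−t/k, t/l] where f attains its maximum over [−t/k, t/l], the second derivative f″(x*) is strictly negative. In the excluded case (l = 1, t = π/(k+1), k²r₁r₂ + (k+1)²r₁r₃ − r₂r₃ = 0), f attains its maximum over [−t/k, t/l] at the point π/(k+1) with multiplicity 4: f′, f″ and f‴ vanish at π/(k+1) and the fourth derivative f⁗(π/(k+1)) is strictly negative. -/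
open Real Filter Set Topology

set_option maxHeartbeats 1600000

namespace S14

/-! ### Elementary trigonometric inequalities -/

lemma tan_aux (m : ℕ) {v : ℝ} (hv : 0 ≤ v) (hmv : (m : ℝ) * v ≤ π / 2) :
    (m : ℝ) * Real.sin v * Real.cos ((m : ℝ) * v) ≤ Real.sin ((m : ℝ) * v) * Real.cos v := by
  induction m with
  | zero => simp
  | succ n ih =>
    have hπ := Real.pi_pos
    have hcast : ((n + 1 : ℕ) : ℝ) = (n : ℝ) + 1 := by push_cast; ring
    rw [hcast] at hmv ⊢
    have hnv2 : (n : ℝ) * v ≤ π / 2 := by nlinarith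
    have h1 := ih hnv2
    have hsv : 0 ≤ Real.sin v := by
      apply Real.sin_nonneg_of_nonneg_of_le_pi hv
      nlinarith
    have hsnv : 0 ≤ Real.sin ((n : ℝ) * v) := by
      apply Real.sin_nonneg_of_nonneg_of_le_pi (by positivity)
      nlinarith
    have hcv : 0 ≤ Real.cos v := by
      apply Real.cos_nonneg_of_mem_Icc
      constructor <;> nlinarith
    have e1 : ((n : ℝ) + 1) * v = (n : ℝ) * v + v := by ring
    rw [e1, Real.sin_add, Real.cos_add]
    nlinarith [mul_nonneg hsnv hsv, mul_nonneg (mul_nonneg hsnv hsv) hsv,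
      mul_nonneg (mul_nonneg hsv hsv) hsnv]

lemma abs_sin_aux (n : ℕ) (v : ℝ) : |Real.sin ((n : ℝ) * v)| ≤ (n : ℝ) * |Real.sin v| := by
  induction n with
  | zero => simp
  | succ n ih =>
    have hcast : ((n + 1 : ℕ) : ℝ) = (n : ℝ) + 1 := by push_cast; ring
    rw [hcast, show ((n : ℝ) + 1) * v = (n : ℝ) * v + v by ring, Real.sin_add]
    calc |Real.sin ((n:ℝ)*v) * Real.cos v + Real.cos ((n:ℝ)*v) * Real.sin v|
        ≤ |Real.sin ((n:ℝ)*v) * Real.cos v| + |Real.cos ((n:ℝ)*v) * Real.sin v| := abs_add_le _ _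
      _ ≤ (n : ℝ) * |Real.sin v| * 1 + 1 * |Real.sin v| := by
          rw [abs_mul, abs_mul]
          have c1 := Real.abs_cos_le_one v
          have c2 := Real.abs_cos_le_one ((n:ℝ)*v)
          have := abs_nonneg (Real.sin ((n:ℝ)*v))
          have := abs_nonneg (Real.sin v)
          nlinarith
      _ = ((n : ℝ) + 1) * |Real.sin v| := by ring

lemma one_sub_cos_aux (n : ℕ) (v : ℝ) :
    1 - Real.cos ((n : ℝ) * v) ≤ (n : ℝ) ^ 2 * (1 - Real.cos v) := by
  induction n with
  | zero => simp
  | succ n ih =>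
    have hcast : ((n + 1 : ℕ) : ℝ) = (n : ℝ) + 1 := by push_cast; ring
    have habs := abs_sin_aux n v
    have h1 : Real.sin ((n:ℝ)*v) * Real.sin v ≤ (n : ℝ) * Real.sin v ^ 2 := by
      calc Real.sin ((n:ℝ)*v) * Real.sin v ≤ |Real.sin ((n:ℝ)*v) * Real.sin v| := le_abs_self _
        _ = |Real.sin ((n:ℝ)*v)| * |Real.sin v| := abs_mul _ _
        _ ≤ ((n : ℝ) * |Real.sin v|) * |Real.sin v| := by
            gcongr
        _ = (n : ℝ) * Real.sin v ^ 2 := by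
            rw [show ((n:ℝ) * |Real.sin v|) * |Real.sin v| = (n:ℝ) * (|Real.sin v|^2) by ring,
              sq_abs]
    have hs2 : Real.sin v ^ 2 = (1 - Real.cos v) * (1 + Real.cos v) := by
      nlinarith [Real.sin_sq_add_cos_sq v]
    have hc1 : Real.cos v ≤ 1 := Real.cos_le_one v
    have hc2 : -1 ≤ Real.cos v := Real.neg_one_le_cos v
    have hcnv1 : Real.cos ((n:ℝ)*v) ≤ 1 := Real.cos_le_one _
    rw [hcast, show ((n : ℝ) + 1) * v = (n : ℝ) * v + v by ring, Real.cos_add]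
    have hnn : (0:ℝ) ≤ (n:ℝ) := n.cast_nonneg
    nlinarith [ih, mul_le_mul_of_nonneg_right hcnv1 (by linarith : (0:ℝ) ≤ 1 - Real.cos v),
      mul_nonneg hnn (by linarith : (0:ℝ) ≤ 1 - Real.cos v),
      mul_le_mul_of_nonneg_left hc1 (mul_nonneg hnn (by linarith : (0:ℝ) ≤ 1 - Real.cos v))]

/-! ### The core second-derivative inequality at interior critical points -/

lemma core' (m : ℕ) (ρ A B C u v : ℝ) (hm : 1 ≤ m) (hρ : 1 ≤ ρ)
    (hA : 0 < A) (hB : 0 < B) (hC : 0 < C)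
    (hu0 : 0 < u) (huπ : u < π) (hv0 : 0 < v)
    (hvu : v ≤ u) (hsum : ρ * u + (m : ℝ) * v ≤ π)
    (hE : A * m * Real.sin u + B * ((m : ℝ) + ρ) * Real.sin (u - v) = C * ρ * Real.sin v) :
    0 < A * (m:ℝ)^2 * Real.cos u + B * ((m:ℝ) + ρ)^2 * Real.cos (u - v) + C * ρ^2 * Real.cos v := by
  have hπ := Real.pi_pos
  have hm1 : (1:ℝ) ≤ (m:ℝ) := by exact_mod_cast hm
  have hmv0 : (0:ℝ) ≤ (m:ℝ) * v := by positivity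
  have hv2 : v ≤ π / 2 := by nlinarith
  have hsv : 0 < Real.sin v := Real.sin_pos_of_pos_of_lt_pi hv0 (by nlinarith)
  have hsu : 0 < Real.sin u := Real.sin_pos_of_pos_of_lt_pi hu0 huπ
  have hcv : 0 ≤ Real.cos v := Real.cos_nonneg_of_mem_Icc ⟨by nlinarith, hv2⟩
  have hw0 : 0 ≤ u - v := by linarith
  have hwπ : u - v < π := by linarith
  have hsw : 0 ≤ Real.sin (u - v) := Real.sin_nonneg_of_nonneg_of_le_pi hw0 hwπ.le
  have hterm1 : 0 ≤ ρ * Real.sin u * Real.cos v + (m:ℝ) * Real.cos u * Real.sin v := by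
    rcases le_or_gt 0 (Real.cos u) with hcu | hcu
    · have f1 : (0:ℝ) ≤ ρ * Real.sin u * Real.cos v := by positivity
      have f2 : (0:ℝ) ≤ (m:ℝ) * Real.cos u * Real.sin v := by positivity
      linarith
    · have hu2 : π / 2 < u := by
        by_contra hcon
        exact absurd (Real.cos_nonneg_of_mem_Icc ⟨by nlinarith, not_lt.mp hcon⟩) (not_le.mpr hcu)
      have hmv : (m:ℝ) * v ≤ π - u := by nlinarith
      have hπu2 : π - u < π / 2 := by linarith
      have h1 : Real.sin ((m:ℝ)*v) ≤ Real.sin u := by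
        rw [← Real.sin_pi_sub u]
        exact Real.sin_le_sin_of_le_of_le_pi_div_two (by linarith) hπu2.le hmv
      have h2 : -Real.cos u ≤ Real.cos ((m:ℝ)*v) := by
        have := Real.cos_le_cos_of_nonneg_of_le_pi hmv0 (by linarith : π - u ≤ π) hmv
        rwa [Real.cos_pi_sub] at this
      have h3 := tan_aux m hv0.le (by linarith : (m:ℝ) * v ≤ π / 2)
      have d1 : (m:ℝ) * Real.sin v * (-Real.cos u) ≤ (m:ℝ) * Real.sin v * Real.cos ((m:ℝ)*v) :=
        mul_le_mul_of_nonneg_left h2 (by positivity)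
      have d2 : Real.sin ((m:ℝ)*v) * Real.cos v ≤ Real.sin u * Real.cos v :=
        mul_le_mul_of_nonneg_right h1 hcv
      have d3 : Real.sin u * Real.cos v ≤ ρ * (Real.sin u * Real.cos v) :=
        le_mul_of_one_le_left (mul_nonneg hsu.le hcv) hρ
      linarith [d1, d2, d3, h3]
  have hterm2 : 0 < ρ * Real.sin u + (m:ℝ) * Real.cos (u - v) * Real.sin v := by
    rcases le_or_gt 0 (Real.cos (u - v)) with hcw | hcw
    · have f1 : (0:ℝ) ≤ (m:ℝ) * Real.cos (u-v) * Real.sin v := by positivity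
      have f2 : (0:ℝ) < ρ * Real.sin u := by positivity
      linarith
    · have hw2 : π / 2 < u - v := by
        by_contra hcon
        exact absurd (Real.cos_nonneg_of_mem_Icc ⟨by nlinarith, not_lt.mp hcon⟩) (not_le.mpr hcw)
      have hm1v : ((m:ℝ) + 1) * v ≤ π - (u - v) := by nlinarith
      have hπw2 : π - (u - v) < π / 2 := by linarith
      have h5 : Real.sin ((m:ℝ)*v) ≤ Real.sin u := by
        rw [← Real.sin_pi_sub u]
        apply Real.sin_le_sin_of_le_of_le_pi_div_two (by linarith) (by linarith)
        nlinarith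
      have h6 : -Real.cos (u - v) ≤ Real.cos (((m:ℝ)+1)*v) := by
        have := Real.cos_le_cos_of_nonneg_of_le_pi (by positivity : (0:ℝ) ≤ ((m:ℝ)+1)*v)
          (by linarith : π - (u - v) ≤ π) hm1v
        rwa [Real.cos_pi_sub] at this
      have h7 : Real.cos (((m:ℝ)+1)*v) < Real.cos ((m:ℝ)*v) := by
        apply Real.strictAntiOn_cos ⟨hmv0, by nlinarith⟩ ⟨by positivity, by nlinarith⟩
        nlinarith
      have h3 := tan_aux m hv0.le (by nlinarith : (m:ℝ) * v ≤ π / 2)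
      have hsnv : 0 ≤ Real.sin ((m:ℝ)*v) :=
        Real.sin_nonneg_of_nonneg_of_le_pi hmv0 (by nlinarith)
      have e1 : (m:ℝ) * Real.sin v * (-Real.cos (u-v))
          ≤ (m:ℝ) * Real.sin v * Real.cos (((m:ℝ)+1)*v) :=
        mul_le_mul_of_nonneg_left h6 (by positivity)
      have e2 : (m:ℝ) * Real.sin v * Real.cos (((m:ℝ)+1)*v)
          < (m:ℝ) * Real.sin v * Real.cos ((m:ℝ)*v) := by
        have hp : 0 < (m:ℝ) * Real.sin v := by positivity
        exact mul_lt_mul_of_pos_left h7 hp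
      have e4 : Real.sin ((m:ℝ)*v) * Real.cos v ≤ Real.sin ((m:ℝ)*v) :=
        mul_le_of_le_one_right hsnv (Real.cos_le_one v)
      have e6 : Real.sin u ≤ ρ * Real.sin u := le_mul_of_one_le_left hsu.le hρ
      linarith [e1, e2, h3, e4, h5, e6]
  have hident : (A * (m:ℝ)^2 * Real.cos u + B * ((m:ℝ) + ρ)^2 * Real.cos (u - v)
        + C * ρ^2 * Real.cos v) * Real.sin v
      = A * m * (ρ * Real.sin u * Real.cos v + (m:ℝ) * Real.cos u * Real.sin v)
        + B * ((m:ℝ) + ρ) * (ρ * Real.sin u + (m:ℝ) * Real.cos (u - v) * Real.sin v) := by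
    rw [Real.sin_sub] at hE
    rw [Real.cos_sub]
    linear_combination (-(ρ * Real.cos v)) * hE
      + (B * ((m:ℝ) + ρ) * ρ * Real.sin u) * (Real.sin_sq_add_cos_sq v)
  have hpos : 0 < (A * (m:ℝ)^2 * Real.cos u + B * ((m:ℝ) + ρ)^2 * Real.cos (u - v)
      + C * ρ^2 * Real.cos v) * Real.sin v := by
    rw [hident]
    have h1 : 0 ≤ A * m * (ρ * Real.sin u * Real.cos v + (m:ℝ) * Real.cos u * Real.sin v) :=
      mul_nonneg (by positivity) hterm1
    have h2 : 0 < B * ((m:ℝ) + ρ) * (ρ * Real.sin u + (m:ℝ) * Real.cos (u - v) * Real.sin v) :=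
      mul_pos (by positivity) hterm2
    linarith
  nlinarith [hpos, hsv]

/-! ### The explicit trigonometric polynomial and its derivatives -/

noncomputable def G (R A B C p q t : ℝ) (x : ℝ) : ℝ :=
  R + A * Real.cos (p*x + t) + B * Real.cos ((p+q)*x) + C * Real.cos (q*x - t)

noncomputable def G1 (A B C p q t : ℝ) (x : ℝ) : ℝ :=
  -(A * p * Real.sin (p*x + t)) - B * (p+q) * Real.sin ((p+q)*x) - C * q * Real.sin (q*x - t)

noncomputable def G2 (A B C p q t : ℝ) (x : ℝ) : ℝ :=
  -(A * p^2 * Real.cos (p*x + t)) - B * (p+q)^2 * Real.cos ((p+q)*x) - C * q^2 * Real.cos (q*x - t)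

noncomputable def G3 (A B C p q t : ℝ) (x : ℝ) : ℝ :=
  A * p^3 * Real.sin (p*x + t) + B * (p+q)^3 * Real.sin ((p+q)*x) + C * q^3 * Real.sin (q*x - t)

noncomputable def G4 (A B C p q t : ℝ) (x : ℝ) : ℝ :=
  A * p^4 * Real.cos (p*x + t) + B * (p+q)^4 * Real.cos ((p+q)*x) + C * q^4 * Real.cos (q*x - t)

lemma hda_lin (a b x : ℝ) : HasDerivAt (fun y => a * y + b) a x := by
  simpa using ((hasDerivAt_id x).const_mul a).add_const b

lemma hasDerivAt_G (R A B C p q t x : ℝ) :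
    HasDerivAt (G R A B C p q t) (G1 A B C p q t x) x := by
  have h1 := (((hda_lin p t x).cos).const_mul A)
  have h2 := ((by simpa using (hda_lin (p+q) 0 x) :
    HasDerivAt (fun y => (p+q)*y) (p+q) x).cos).const_mul B
  have h3 := (((by simpa using (hda_lin q (-t) x) :
    HasDerivAt (fun y => q*y - t) q x).cos).const_mul C)
  have := (((hasDerivAt_const x R).add h1).add h2).add h3
  refine HasDerivAt.congr_deriv (f := G R A B C p q t) this ?_
  simp [G1]; ring

lemma hasDerivAt_G1 (A B C p q t x : ℝ) :
    HasDerivAt (G1 A B C p q t) (G2 A B C p q t x) x := by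
  have h1 := (((hda_lin p t x).sin).const_mul (A*p)).neg
  have h2 := (((by simpa using (hda_lin (p+q) 0 x) :
    HasDerivAt (fun y => (p+q)*y) (p+q) x).sin).const_mul (B*(p+q)))
  have h3 := (((by simpa using (hda_lin q (-t) x) :
    HasDerivAt (fun y => q*y - t) q x).sin).const_mul (C*q))
  have := (h1.sub h2).sub h3
  refine HasDerivAt.congr_deriv (f := G1 A B C p q t) this ?_
  simp [G2]; ring

lemma hasDerivAt_G2 (A B C p q t x : ℝ) :
    HasDerivAt (G2 A B C p q t) (G3 A B C p q t x) x := by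
  have h1 := (((hda_lin p t x).cos).const_mul (A*p^2)).neg
  have h2 := (((by simpa using (hda_lin (p+q) 0 x) :
    HasDerivAt (fun y => (p+q)*y) (p+q) x).cos).const_mul (B*(p+q)^2))
  have h3 := (((by simpa using (hda_lin q (-t) x) :
    HasDerivAt (fun y => q*y - t) q x).cos).const_mul (C*q^2))
  have := (h1.sub h2).sub h3
  refine HasDerivAt.congr_deriv (f := G2 A B C p q t) this ?_
  simp [G3]; ring

lemma hasDerivAt_G3 (A B C p q t x : ℝ) :
    HasDerivAt (G3 A B C p q t) (G4 A B C p q t x) x := by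
  have h1 := (((hda_lin p t x).sin).const_mul (A*p^3))
  have h2 := (((by simpa using (hda_lin (p+q) 0 x) :
    HasDerivAt (fun y => (p+q)*y) (p+q) x).sin).const_mul (B*(p+q)^3))
  have h3 := (((by simpa using (hda_lin q (-t) x) :
    HasDerivAt (fun y => q*y - t) q x).sin).const_mul (C*q^3))
  have := ((h1.add h2).add h3)
  refine HasDerivAt.congr_deriv (f := G3 A B C p q t) this ?_
  simp [G4]; ring

lemma deriv_G (R A B C p q t : ℝ) : deriv (G R A B C p q t) = G1 A B C p q t :=
  funext fun x => (hasDerivAt_G R A B C p q t x).deriv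

lemma deriv_G1 (A B C p q t : ℝ) : deriv (G1 A B C p q t) = G2 A B C p q t :=
  funext fun x => (hasDerivAt_G1 A B C p q t x).deriv

lemma deriv_G2 (A B C p q t : ℝ) : deriv (G2 A B C p q t) = G3 A B C p q t :=
  funext fun x => (hasDerivAt_G2 A B C p q t x).deriv

lemma deriv_G3 (A B C p q t : ℝ) : deriv (G3 A B C p q t) = G4 A B C p q t :=
  funext fun x => (hasDerivAt_G3 A B C p q t x).deriv

lemma iteratedDeriv_G2 (R A B C p q t : ℝ) :
    iteratedDeriv 2 (G R A B C p q t) = G2 A B C p q t := by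
  rw [iteratedDeriv_succ, iteratedDeriv_one, deriv_G, deriv_G1]

lemma iteratedDeriv_G3 (R A B C p q t : ℝ) :
    iteratedDeriv 3 (G R A B C p q t) = G3 A B C p q t := by
  rw [iteratedDeriv_succ, iteratedDeriv_G2, deriv_G2]

lemma iteratedDeriv_G4 (R A B C p q t : ℝ) :
    iteratedDeriv 4 (G R A B C p q t) = G4 A B C p q t := by
  rw [iteratedDeriv_succ, iteratedDeriv_G3, deriv_G3]

/-! ### Points near a non-maximum -/

lemma exists_gt_right {f : ℝ → ℝ} {x b d : ℝ} (hf : HasDerivAt f d x) (hd : 0 < d)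
    (hxb : x < b) : ∃ y, x < y ∧ y < b ∧ f x < f y := by
  have h := hasDerivAt_iff_tendsto_slope.mp hf
  have hev : ∀ᶠ y in 𝓝[>] x, 0 < slope f x y :=
    (h.eventually (lt_mem_nhds hd)).filter_mono
      (nhdsWithin_mono x fun y hy => ne_of_gt hy)
  have hb : Ioo x b ∈ 𝓝[>] x := Ioo_mem_nhdsGT hxb
  obtain ⟨y, hy1, hy2⟩ := (hev.and (Filter.eventually_of_mem hb (fun z hz => hz))).exists
  refine ⟨y, hy2.1, hy2.2, ?_⟩
  have := hy1
  rw [slope_def_field] at this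
  have hyx : 0 < y - x := by linarith [hy2.1]
  nlinarith [mul_pos this hyx, div_mul_cancel₀ (f y - f x) (ne_of_gt hyx)]

lemma exists_gt_left {f : ℝ → ℝ} {x a d : ℝ} (hf : HasDerivAt f d x) (hd : d < 0)
    (hax : a < x) : ∃ y, a < y ∧ y < x ∧ f x < f y := by
  have h := hasDerivAt_iff_tendsto_slope.mp hf
  have hev : ∀ᶠ y in 𝓝[<] x, slope f x y < 0 :=
    (h.eventually (gt_mem_nhds hd)).filter_mono
      (nhdsWithin_mono x fun y hy => ne_of_lt hy)
  have hb : Ioo a x ∈ 𝓝[<] x := Ioo_mem_nhdsLT hax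
  obtain ⟨y, hy1, hy2⟩ := (hev.and (Filter.eventually_of_mem hb (fun z hz => hz))).exists
  refine ⟨y, hy2.1, hy2.2, ?_⟩
  have := hy1
  rw [slope_def_field] at this
  have hyx : y - x < 0 := by linarith [hy2.2]
  nlinarith [div_mul_cancel₀ (f y - f x) (ne_of_lt hyx)]

lemma exists_gt_right_min {f f' : ℝ → ℝ} (hf : ∀ y, HasDerivAt f (f' y) y)
    {x b d : ℝ} (hx0 : f' x = 0) (hf' : HasDerivAt f' d x) (hd : 0 < d) (hxb : x < b) :
    ∃ y, x < y ∧ y < b ∧ f x < f y := by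
  have h := hasDerivAt_iff_tendsto_slope.mp hf'
  have hev : ∀ᶠ y in 𝓝[>] x, 0 < slope f' x y :=
    (h.eventually (lt_mem_nhds hd)).filter_mono
      (nhdsWithin_mono x fun y hy => ne_of_gt hy)
  have hev2 : ∀ᶠ y in 𝓝[>] x, 0 < f' y := by
    filter_upwards [hev, Filter.eventually_of_mem (self_mem_nhdsWithin : Ioi x ∈ 𝓝[>] x)
      (fun z hz => hz)] with y h1 h2
    rw [slope_def_field] at h1
    have hyx : 0 < y - x := sub_pos.mpr h2
    rw [hx0] at h1
    nlinarith [div_mul_cancel₀ (f' y - 0) (ne_of_gt hyx)]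
  obtain ⟨c, hc, hsub⟩ := mem_nhdsGT_iff_exists_Ioo_subset.mp hev2
  set c' := min c b with hc'
  have hxc' : x < c' := lt_min hc hxb
  set y := (x + c') / 2 with hy
  have hxy : x < y := by simp [hy]; linarith
  have hyc' : y < c' := by simp [hy]; linarith
  refine ⟨y, hxy, by simp [hc'] at hyc'; linarith [hyc'.2], ?_⟩
  have hmono : StrictMonoOn f (Icc x y) := by
    apply strictMonoOn_of_deriv_pos (convex_Icc x y)
    · exact fun z _ => ((hf z).differentiableAt.continuousAt).continuousWithinAt
    · intro z hz
      rw [interior_Icc] at hz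
      rw [(hf z).deriv]
      exact hsub ⟨hz.1, by simp [hc'] at hyc'; linarith [hz.2, hyc'.1]⟩
  exact hmono (left_mem_Icc.mpr hxy.le) (right_mem_Icc.mpr hxy.le) hxy

lemma exists_gt_left_min {f f' : ℝ → ℝ} (hf : ∀ y, HasDerivAt f (f' y) y)
    {x a d : ℝ} (hx0 : f' x = 0) (hf' : HasDerivAt f' d x) (hd : 0 < d) (hax : a < x) :
    ∃ y, a < y ∧ y < x ∧ f x < f y := by
  have h := hasDerivAt_iff_tendsto_slope.mp hf'
  have hev : ∀ᶠ y in 𝓝[<] x, 0 < slope f' x y :=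
    (h.eventually (lt_mem_nhds hd)).filter_mono
      (nhdsWithin_mono x fun y hy => ne_of_lt hy)
  have hev2 : ∀ᶠ y in 𝓝[<] x, f' y < 0 := by
    filter_upwards [hev, Filter.eventually_of_mem (self_mem_nhdsWithin : Iio x ∈ 𝓝[<] x)
      (fun z hz => hz)] with y h1 h2
    rw [slope_def_field] at h1
    have hyx : y - x < 0 := sub_neg.mpr h2
    rw [hx0] at h1
    nlinarith [div_mul_cancel₀ (f' y - 0) (ne_of_lt hyx)]
  obtain ⟨c, hc, hsub⟩ := mem_nhdsLT_iff_exists_Ioo_subset.mp hev2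
  set c' := max c a with hc'
  have hxc' : c' < x := max_lt hc hax
  set y := (x + c') / 2 with hy
  have hxy : y < x := by simp [hy]; linarith
  have hyc' : c' < y := by simp [hy]; linarith
  refine ⟨y, by simp [hc'] at hyc'; linarith [hyc'.2], hxy, ?_⟩
  have hanti : StrictAntiOn f (Icc y x) := by
    apply strictAntiOn_of_deriv_neg (convex_Icc y x)
    · exact fun z _ => ((hf z).differentiableAt.continuousAt).continuousWithinAt
    · intro z hz
      rw [interior_Icc] at hz
      rw [(hf z).deriv]
      exact hsub ⟨by simp [hc'] at hyc'; linarith [hz.1, hyc'.1], hz.2⟩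
  exact hanti (left_mem_Icc.mpr hxy.le) (right_mem_Icc.mpr hxy.le) hxy

/-! ### Expansion of `fKL` -/

lemma fKL_eq (r₁ r₂ r₃ t : ℝ) (k l : ℕ) :
    fKL r₁ r₂ r₃ t k l =
      G (r₁^2 + r₂^2 + r₃^2) (2*r₁*r₂) (2*r₁*r₃) (2*r₂*r₃) (k:ℝ) (l:ℝ) t := by
  funext x
  unfold fKL G
  rw [← Complex.normSq_eq_norm_sq, Complex.normSq_apply]
  simp only [Complex.add_re, Complex.add_im, Complex.mul_re, Complex.mul_im,
    Complex.ofReal_re, Complex.ofReal_im, Complex.exp_re, Complex.exp_im,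
    Complex.I_re, Complex.I_im]
  simp only [zero_mul, mul_zero, sub_zero, zero_sub, zero_add, neg_zero, Real.exp_zero,
    one_pow, one_mul, mul_one, neg_mul, Real.cos_neg, Real.sin_neg]
  rw [show ((k:ℝ) + (l:ℝ)) * x = (k:ℝ)*x + (l:ℝ)*x by ring]
  rw [Real.cos_add ((k:ℝ)*x) t, Real.cos_add ((k:ℝ)*x) ((l:ℝ)*x),
    Real.cos_sub ((l:ℝ)*x) t]
  linear_combination r₁^2 * (Real.sin_sq_add_cos_sq ((k:ℝ)*x))
    + r₂^2 * (Real.sin_sq_add_cos_sq t) + r₃^2 * (Real.sin_sq_add_cos_sq ((l:ℝ)*x))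

end S14

theorem stmt14 (k l : ℕ) (hk : 0 < k) (hl : 0 < l) (hkl : Nat.Coprime k l)
    (r₁ r₂ r₃ : ℝ) (hr₁ : 0 < r₁) (hr₂ : 0 < r₂) (hr₃ : 0 < r₃)
    (hklr : k * r₁ ≤ l * r₃)
    (t : ℝ) (ht : t ∈ Set.Ioc 0 (π / (k + l))) :
    -- multiplicity 2, except in the degenerate case
    (¬ (l = 1 ∧ t = π / (k + 1) ∧
        k ^ 2 * r₁ * r₂ + (k + 1 : ℝ) ^ 2 * r₁ * r₃ - r₂ * r₃ = 0) →
      ∀ x' ∈ Set.Icc (-t / k) (t / l),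
        (∀ y ∈ Set.Icc (-t / k) (t / l),
          fKL r₁ r₂ r₃ t k l y ≤ fKL r₁ r₂ r₃ t k l x') →
        iteratedDeriv 2 (fKL r₁ r₂ r₃ t k l) x' < 0) ∧
    -- in the degenerate case, the maximum is attained at π/(k+1) with multiplicity 4
    ((l = 1 ∧ t = π / (k + 1) ∧
        k ^ 2 * r₁ * r₂ + (k + 1 : ℝ) ^ 2 * r₁ * r₃ - r₂ * r₃ = 0) →
      (∀ y ∈ Set.Icc (-t / k) (t / l),
        fKL r₁ r₂ r₃ t k l y ≤ fKL r₁ r₂ r₃ t k l (π / (k + 1))) ∧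
      deriv (fKL r₁ r₂ r₃ t k l) (π / (k + 1)) = 0 ∧
      iteratedDeriv 2 (fKL r₁ r₂ r₃ t k l) (π / (k + 1)) = 0 ∧
      iteratedDeriv 3 (fKL r₁ r₂ r₃ t k l) (π / (k + 1)) = 0 ∧
      iteratedDeriv 4 (fKL r₁ r₂ r₃ t k l) (π / (k + 1)) < 0) := by
  have hκpos : (0:ℝ) < (k:ℝ) := by exact_mod_cast hk
  have hℓpos : (0:ℝ) < (l:ℝ) := by exact_mod_cast hl
  have hκ1 : (1:ℝ) ≤ (k:ℝ) := by exact_mod_cast hk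
  have hℓ1 : (1:ℝ) ≤ (l:ℝ) := by exact_mod_cast hl
  have ht0 : 0 < t := ht.1
  have hπ := Real.pi_pos
  have htπ : ((k:ℝ)+(l:ℝ))*t ≤ π := by
    have h2 := ht.2
    rw [le_div_iff₀ (by linarith : (0:ℝ) < (k:ℝ)+(l:ℝ))] at h2
    linarith
  set R := r₁^2 + r₂^2 + r₃^2 with hRdef
  set A := 2*r₁*r₂ with hAdef
  set B := 2*r₁*r₃ with hBdef
  set C := 2*r₂*r₃ with hCdef
  have hA : 0 < A := by rw [hAdef]; positivity
  have hB : 0 < B := by rw [hBdef]; positivity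
  have hC : 0 < C := by rw [hCdef]; positivity
  have hfg : fKL r₁ r₂ r₃ t k l = S14.G R A B C (k:ℝ) (l:ℝ) t := S14.fKL_eq r₁ r₂ r₃ t k l
  have hab : -t/(k:ℝ) < t/(l:ℝ) := by
    have h1 : -t/(k:ℝ) < 0 := div_neg_of_neg_of_pos (by linarith) hκpos
    have h2 : 0 < t/(l:ℝ) := div_pos ht0 hℓpos
    linarith
  constructor
  · -- nondegenerate bullet
    intro hnd x' hx' hmax
    rw [hfg] at hmax
    rw [hfg, S14.iteratedDeriv_G2]
    obtain ⟨hx1, hx2⟩ := hx'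
    rcases eq_or_lt_of_le hx1 with hxa | hxa
    · -- left endpoint
      have hxa' : x' = -t/(k:ℝ) := hxa.symm
      have e0 : (k:ℝ)*x' + t = 0 := by rw [hxa']; field_simp; ring
      have e1 : ((k:ℝ)+(l:ℝ))*x' = -(((k:ℝ)+(l:ℝ))*t/(k:ℝ)) := by rw [hxa']; ring
      have e2 : (l:ℝ)*x' - t = -(((k:ℝ)+(l:ℝ))*t/(k:ℝ)) := by
        rw [hxa']; field_simp; ring
      set w0 := ((k:ℝ)+(l:ℝ))*t/(k:ℝ) with hw0def
      have hw0pos : 0 < w0 := div_pos (mul_pos (by linarith) ht0) hκpos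
      have hκw0 : (k:ℝ)*w0 = ((k:ℝ)+(l:ℝ))*t := by
        rw [hw0def]; field_simp
      have hw0π : w0 ≤ π := by nlinarith
      have hG1x : S14.G1 A B C (k:ℝ) (l:ℝ) t x' = (B*((k:ℝ)+(l:ℝ)) + C*(l:ℝ)) * Real.sin w0 := by
        simp only [S14.G1]
        rw [e0, e1, e2, Real.sin_zero, Real.sin_neg]
        ring
      have hxb : x' < t/(l:ℝ) := by rw [hxa']; exact hab
      rcases lt_or_eq_of_le hw0π with hw0lt | hw0eq
      · have hs : 0 < Real.sin w0 := Real.sin_pos_of_pos_of_lt_pi hw0pos hw0lt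
        have hder : 0 < S14.G1 A B C (k:ℝ) (l:ℝ) t x' := by
          rw [hG1x]
          apply mul_pos (by nlinarith) hs
        obtain ⟨y, hy1, hy2, hy3⟩ :=
          S14.exists_gt_right (S14.hasDerivAt_G R A B C (k:ℝ) (l:ℝ) t x') hder hxb
        exact absurd (hmax y ⟨by linarith, hy2.le⟩) (not_le.mpr hy3)
      · -- w0 = π, forces k = 1
        have hκeq : (k:ℝ) = 1 := le_antisymm (by nlinarith) hκ1
        have hG1z : S14.G1 A B C (k:ℝ) (l:ℝ) t x' = 0 := by
          rw [hG1x, hw0eq, Real.sin_pi, mul_zero]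
        have hG2x : S14.G2 A B C (k:ℝ) (l:ℝ) t x'
            = -(A*(k:ℝ)^2) + B*((k:ℝ)+(l:ℝ))^2 + C*(l:ℝ)^2 := by
          rw [hw0eq] at e1 e2
          simp only [S14.G2]
          rw [e0, e1, e2, Real.cos_zero, Real.cos_neg, Real.cos_pi]
          ring
        have hklr' : (k:ℝ)*r₁ ≤ (l:ℝ)*r₃ := by exact_mod_cast hklr
        have hG2pos : 0 < S14.G2 A B C (k:ℝ) (l:ℝ) t x' := by
          rw [hG2x, hκeq]
          rw [hκeq] at hklr'
          rw [hAdef, hBdef, hCdef]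
          nlinarith [mul_le_mul_of_nonneg_left hklr' (by linarith : (0:ℝ) ≤ 2*r₂),
            mul_pos hr₁ hr₃, mul_pos hr₂ hr₃,
            mul_nonneg (mul_nonneg (by linarith : (0:ℝ) ≤ 2*r₂*r₃) (by linarith : (0:ℝ) ≤ (l:ℝ))) (by linarith : (0:ℝ) ≤ (l:ℝ)-1)]
        obtain ⟨y, hy1, hy2, hy3⟩ :=
          S14.exists_gt_right_min (fun y => S14.hasDerivAt_G R A B C (k:ℝ) (l:ℝ) t y)
            hG1z (S14.hasDerivAt_G1 A B C (k:ℝ) (l:ℝ) t x') hG2pos hxb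
        exact absurd (hmax y ⟨by linarith, hy2.le⟩) (not_le.mpr hy3)
    · rcases eq_or_lt_of_le hx2 with hxb | hxb
      · -- right endpoint x' = t / l
        have e0 : (l:ℝ)*x' - t = 0 := by rw [hxb]; field_simp; ring
        have e1 : ((k:ℝ)+(l:ℝ))*x' = ((k:ℝ)+(l:ℝ))*t/(l:ℝ) := by rw [hxb]; ring
        have e2 : (k:ℝ)*x' + t = ((k:ℝ)+(l:ℝ))*t/(l:ℝ) := by
          rw [hxb]; field_simp
        set u0 := ((k:ℝ)+(l:ℝ))*t/(l:ℝ) with hu0def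
        have hu0pos : 0 < u0 := div_pos (mul_pos (by linarith) ht0) hℓpos
        have hℓu0 : (l:ℝ)*u0 = ((k:ℝ)+(l:ℝ))*t := by rw [hu0def]; field_simp
        have hu0π : u0 ≤ π := by nlinarith
        have hG1x : S14.G1 A B C (k:ℝ) (l:ℝ) t x'
            = -((A*(k:ℝ) + B*((k:ℝ)+(l:ℝ))) * Real.sin u0) := by
          simp only [S14.G1]
          rw [e0, e1, e2, Real.sin_zero]
          ring
        rcases lt_or_eq_of_le hu0π with hu0lt | hu0eq
        · have hs : 0 < Real.sin u0 := Real.sin_pos_of_pos_of_lt_pi hu0pos hu0lt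
          have hder : S14.G1 A B C (k:ℝ) (l:ℝ) t x' < 0 := by
            rw [hG1x]
            have h0 : 0 < (A*(k:ℝ) + B*((k:ℝ)+(l:ℝ))) * Real.sin u0 :=
              mul_pos (by nlinarith) hs
            linarith
          obtain ⟨y, hy1, hy2, hy3⟩ :=
            S14.exists_gt_left (S14.hasDerivAt_G R A B C (k:ℝ) (l:ℝ) t x') hder hxa
          exact absurd (hmax y ⟨hy1.le, by linarith⟩) (not_le.mpr hy3)
        · -- u0 = π : l = 1, t = π/(k+1)
          have hℓeq : (l:ℝ) = 1 := le_antisymm (by nlinarith) hℓ1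
          have hleq : l = 1 := by exact_mod_cast hℓeq
          have htval : t = π/((k:ℝ)+1) := by
            rw [eq_div_iff (by linarith : ((k:ℝ)+1) ≠ 0)]
            nlinarith [hℓu0, hu0eq, hℓeq]
          have hG1z : S14.G1 A B C (k:ℝ) (l:ℝ) t x' = 0 := by
            rw [hG1x, hu0eq, Real.sin_pi, mul_zero, neg_zero]
          have hG2x : S14.G2 A B C (k:ℝ) (l:ℝ) t x'
              = A*(k:ℝ)^2 + B*((k:ℝ)+(l:ℝ))^2 - C*(l:ℝ)^2 := by
            rw [hu0eq] at e1 e2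
            simp only [S14.G2]
            rw [e0, e1, e2, Real.cos_zero, Real.cos_pi]
            ring
          set D := (k:ℝ)^2*r₁*r₂ + ((k:ℝ)+1)^2*r₁*r₃ - r₂*r₃ with hDdef
          have hDne : D ≠ 0 := by
            intro h0
            exact hnd ⟨hleq, htval, by rw [hDdef] at h0; exact h0⟩
          have hG2D : S14.G2 A B C (k:ℝ) (l:ℝ) t x' = 2*D := by
            rw [hG2x, hDdef, hAdef, hBdef, hCdef, hℓeq]; ring
          rcases lt_or_gt_of_ne hDne with hD | hD
          · rw [hG2D]; linarith
          · have hG2pos : 0 < S14.G2 A B C (k:ℝ) (l:ℝ) t x' := by rw [hG2D]; linarith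
            obtain ⟨y, hy1, hy2, hy3⟩ :=
              S14.exists_gt_left_min (fun y => S14.hasDerivAt_G R A B C (k:ℝ) (l:ℝ) t y)
                hG1z (S14.hasDerivAt_G1 A B C (k:ℝ) (l:ℝ) t x') hG2pos hxa
            exact absurd (hmax y ⟨hy1.le, by linarith⟩) (not_le.mpr hy3)
      · -- interior point
        have hloc : IsLocalMax (S14.G R A B C (k:ℝ) (l:ℝ) t) x' :=
          Filter.eventually_of_mem (Icc_mem_nhds hxa hxb) (fun y hy => hmax y hy)
        have hder0 : S14.G1 A B C (k:ℝ) (l:ℝ) t x' = 0 := by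
          have h0 := hloc.deriv_eq_zero
          rwa [S14.deriv_G] at h0
        have hux : 0 < (k:ℝ)*x' + t := by
          have h0 := (div_lt_iff₀ hκpos).mp hxa
          nlinarith
        have hvx : 0 < t - (l:ℝ)*x' := by
          have h0 := (lt_div_iff₀ hℓpos).mp hxb
          nlinarith
        have huπ : (k:ℝ)*x' + t < π := by nlinarith [mul_pos hκpos hvx]
        have hvπ : t - (l:ℝ)*x' < π := by nlinarith [mul_pos hℓpos hux]
        set u := (k:ℝ)*x' + t with hudef
        set v := t - (l:ℝ)*x' with hvdef
        have e1 : ((k:ℝ)+(l:ℝ))*x' = u - v := by rw [hudef, hvdef]; ring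
        have e2 : (l:ℝ)*x' - t = -v := by rw [hvdef]; ring
        have hsumeq : (l:ℝ)*u + (k:ℝ)*v = ((k:ℝ)+(l:ℝ))*t := by
          rw [hudef, hvdef]; ring
        have hE : A*(k:ℝ)*Real.sin u + B*((k:ℝ)+(l:ℝ))*Real.sin (u - v)
            = C*(l:ℝ)*Real.sin v := by
          simp only [S14.G1] at hder0
          rw [e1, e2, Real.sin_neg] at hder0
          linarith
        simp only [S14.G2]
        rw [← hudef, e1, e2, Real.cos_neg]
        rcases le_total v u with hvu | huv
        · have hcore := S14.core' k (l:ℝ) A B C u v hk hℓ1 hA hB hC hux huπ hvx hvu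
            (by linarith) hE
          linarith
        · have hE' : C*(l:ℝ)*Real.sin v + B*((l:ℝ)+(k:ℝ))*Real.sin (v - u)
              = A*(k:ℝ)*Real.sin u := by
            rw [show v - u = -(u-v) by ring, Real.sin_neg]
            linarith
          have hcore := S14.core' l (k:ℝ) C B A v u hl hκ1 hC hB hA hvx hvπ hux huv
            (by linarith) hE'
          rw [show v - u = -(u-v) by ring, Real.cos_neg] at hcore
          nlinarith [hcore]
  · -- degenerate bullet
    rintro ⟨hleq, ht1, hD⟩
    subst hleq
    have hπt : ((k:ℝ)+1)*t = π := by
      rw [ht1]; field_simp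
    have hceq : C = A*(k:ℝ)^2 + B*((k:ℝ)+1)^2 := by
      rw [hAdef, hBdef, hCdef]; linear_combination (-2 : ℝ)*hD
    rw [hfg, ← ht1]
    refine ⟨?_, ?_, ?_, ?_, ?_⟩
    · intro y hy
      simp only [S14.G, Nat.cast_one, one_mul]
      have f0 : (k:ℝ)*t + t = π := by linarith
      have e0 : (k:ℝ)*y + t = π - (k:ℝ)*(t-y) := by linarith
      have e1 : ((k:ℝ)+1)*y = π - ((k:ℝ)+1)*(t-y) := by linarith
      rw [f0, hπt, sub_self, e0, e1, show y - t = -(t-y) by ring,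
        Real.cos_neg, Real.cos_pi_sub, Real.cos_pi_sub, Real.cos_pi, Real.cos_zero]
      have g1 := S14.one_sub_cos_aux k (t-y)
      have g2 := S14.one_sub_cos_aux (k+1) (t-y)
      push_cast at g2
      nlinarith [mul_le_mul_of_nonneg_left g1 hA.le, mul_le_mul_of_nonneg_left g2 hB.le,
        Real.cos_le_one (t-y)]
    · rw [S14.deriv_G]
      simp only [S14.G1, Nat.cast_one, one_mul]
      rw [show (k:ℝ)*t + t = π by linarith, hπt, sub_self, Real.sin_pi, Real.sin_zero]
      ring
    · rw [S14.iteratedDeriv_G2]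
      simp only [S14.G2, Nat.cast_one, one_mul]
      rw [show (k:ℝ)*t + t = π by linarith, hπt, sub_self, Real.cos_pi, Real.cos_zero]
      rw [hceq]; ring
    · rw [S14.iteratedDeriv_G3]
      simp only [S14.G3, Nat.cast_one, one_mul]
      rw [show (k:ℝ)*t + t = π by linarith, hπt, sub_self, Real.sin_pi, Real.sin_zero]
      ring
    · rw [S14.iteratedDeriv_G4]
      simp only [S14.G4, Nat.cast_one, one_mul]
      rw [show (k:ℝ)*t + t = π by linarith, hπt, sub_self, Real.cos_pi, Real.cos_zero]
      rw [hceq]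
      nlinarith [mul_nonneg hA.le (mul_nonneg (sq_nonneg ((k:ℝ))) (by nlinarith : (0:ℝ) ≤ (k:ℝ)^2 - 1)),
        mul_pos hB (mul_pos (by positivity : (0:ℝ) < ((k:ℝ)+1)^2) (by nlinarith : (0:ℝ) < ((k:ℝ)+1)^2 - 1))]
end
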